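/- arXiv:0804.4244 — 2 statements merged into one kernel-verified Lean document; each statement's English description precedes it below -/
import Mathlib

section
/- Let T : X → X be a proper map on a locally compact separable space and T̃ its extension to the one-point compactification X̃. Then h(T) = h(T̃), where h denotes topological entropy (via admissible coverings on X, and the usual AKM entropy on the compact space X̃). -/
open Set Filter Topology

/-- A map is proper if it is continuous and preimages of compact sets are compact. -/
def IsProper {X Y : Type*} [TopologicalSpace X] [TopologicalSpace Y] (f : X → Y) : Prop :=
  Continuous f ∧ ∀ K : Set Y, IsCompact K → IsCompact (f ⁻¹' K)

/-- An admissible covering: open, finite, covers, and each element has compact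
closure or compact complement. -/
def IsAdmissibleCover {X : Type*} [TopologicalSpace X] (α : Set (Set X)) : Prop :=
  α.Finite ∧ (∀ A ∈ α, IsOpen A) ∧ ⋃₀ α = univ ∧
    ∀ A ∈ α, IsCompact (closure A) ∨ IsCompact Aᶜ

/-- `coverIter T α n` is the collection of sets `A₀ ∩ T⁻¹ A₁ ∩ ⋯ ∩ T⁻⁽ⁿ⁻¹⁾ A_{n-1}`
with all `Aᵢ ∈ α`; the paper's `αⁿ` is `coverIter T α (n+1)`. -/
def coverIter {X : Type*} (T : X → X) (α : Set (Set X)) (n : ℕ) : Set (Set X) :=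
  {B | ∃ A : Fin n → Set X, (∀ i, A i ∈ α) ∧ B = ⋂ i : Fin n, T^[i.val] ⁻¹' A i}

/-- `coverNum β` is the minimal cardinality of a (finite) subcover of `β`. -/
noncomputable def coverNum {X : Type*} (β : Set (Set X)) : ℕ :=
  sInf {k | ∃ γ ⊆ β, γ.Finite ∧ ⋃₀ γ = univ ∧ γ.ncard = k}

/-- `h(T, α) = lim (1/n) log N(αⁿ)` (as a limsup, valued in `EReal`). -/
noncomputable def coverEntropyOf {X : Type*} (T : X → X) (α : Set (Set X)) : EReal :=
  Filter.limsup (fun n : ℕ => ((Real.log (coverNum (coverIter T α n)) / n : ℝ) : EReal)) Filter.atTop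

/-- The topological entropy `h(T)`, the supremum of `h(T, α)` over admissible coverings. -/
noncomputable def topEntropy {X : Type*} [TopologicalSpace X] (T : X → X) : EReal :=
  ⨆ (α : Set (Set X)) (_ : IsAdmissibleCover α), coverEntropyOf T α

/-- The extension of `T : X → X` to the one-point compactification, fixing `∞`. -/
def onePointExt {X : Type*} (T : X → X) : OnePoint X → OnePoint X := Option.map T


/-
An admissible cover of `X` becomes an open cover of `X̃` once `∞` is added to its members with
compact complement, and restricting its iterates back to `X` gives `h(T) ≤ h(T̃)`.

Conversely, let `β` be an open cover of `X̃` and `V ∈ β` contain `∞`, so `X \ V` is compact.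
For a block length `m`, the traces on `X` of `E ∪ Vᵐ`, with `E` running over the cylinders of `βᵐ`
and `Vᵐ` the cylinder of the constant word `V`, form an admissible cover `αₘ` of `X` because `T` is
proper. A point of `X` in an `αₘ`-cylinder of length `N` lies in a `β`-cylinder determined by that
`αₘ`-cylinder and by the set of length-`m` blocks of its orbit that leave `V`, so
`N(βᴺ) ≤ 2^(N/m+1) N(αₘᴺ) + 1` and `h(T̃, β) ≤ log 2 / m + h(T)` for every `m ≥ 1`.
-/

section Cylinders

variable {X Y : Type*}

def cylinder (T : X → X) {n : ℕ} (A : Fin n → Set X) : Set X :=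
  ⋂ i : Fin n, T^[i] ⁻¹' A i

theorem mem_cylinder {T : X → X} {n : ℕ} {A : Fin n → Set X} {x : X} :
    x ∈ cylinder T A ↔ ∀ i : Fin n, T^[i] x ∈ A i := by
  simp [cylinder]

theorem coverIter_eq_image (T : X → X) (α : Set (Set X)) (n : ℕ) :
    coverIter T α n = cylinder T '' univ.pi fun _ : Fin n => α := by
  ext B
  simp [coverIter, cylinder, eq_comm]

theorem Function.Semiconj.preimage_cylinder {g : X → Y} {T : X → X} {S : Y → Y}
    (h : Function.Semiconj g T S) {n : ℕ} (B : Fin n → Set Y) :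
    g ⁻¹' cylinder S B = cylinder T (fun i => g ⁻¹' B i) := by
  ext x
  simp only [mem_preimage, mem_cylinder, (h.iterate_right _).eq]

theorem exists_word_mem_cylinder {α : Set (Set X)} (hα : ⋃₀ α = univ) (T : X → X) (n : ℕ)
    (x : X) : ∃ A ∈ univ.pi fun _ : Fin n => α, x ∈ cylinder T A := by
  have hx (i : Fin n) : ∃ A ∈ α, T^[i] x ∈ A := mem_sUnion.1 (hα ▸ mem_univ _)
  choose A hA hxA using hx
  exact ⟨A, fun i _ => hA i, mem_cylinder.2 hxA⟩

theorem coverIter_finite {α : Set (Set X)} (hα : α.Finite) (T : X → X) (n : ℕ) :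
    (coverIter T α n).Finite := by
  rw [coverIter_eq_image]
  exact (Set.Finite.pi fun _ => hα).image _

theorem sUnion_coverIter {α : Set (Set X)} (hα : ⋃₀ α = univ) (T : X → X) (n : ℕ) :
    ⋃₀ coverIter T α n = univ := by
  refine eq_univ_of_forall fun x => ?_
  obtain ⟨A, hA, hxA⟩ := exists_word_mem_cylinder hα T n x
  rw [coverIter_eq_image]
  exact ⟨_, mem_image_of_mem _ hA, hxA⟩

end Cylinders

section CoverNum

variable {X Y : Type*}

theorem coverNum_le_ncard {β γ : Set (Set X)} (hγβ : γ ⊆ β) (hγ : γ.Finite)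
    (hγcov : ⋃₀ γ = univ) : coverNum β ≤ γ.ncard :=
  Nat.sInf_le ⟨γ, hγβ, hγ, hγcov, rfl⟩

theorem exists_subcover_ncard_eq_coverNum {β : Set (Set X)} (hβ : β.Finite)
    (hβcov : ⋃₀ β = univ) :
    ∃ γ ⊆ β, γ.Finite ∧ ⋃₀ γ = univ ∧ γ.ncard = coverNum β := by
  have hβmem : β.ncard ∈ {k | ∃ γ ⊆ β, γ.Finite ∧ ⋃₀ γ = univ ∧ γ.ncard = k} :=
    ⟨β, subset_rfl, hβ, hβcov, rfl⟩
  exact Nat.sInf_mem ⟨_, hβmem⟩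

theorem coverNum_eq_zero_of_isEmpty [IsEmpty X] (β : Set (Set X)) : coverNum β = 0 :=
  Nat.le_zero.1 <| (coverNum_le_ncard (empty_subset β) finite_empty
    (sUnion_empty.trans (univ_eq_empty_iff.2 ‹_›).symm)).trans_eq (ncard_empty _)

theorem coverNum_le_of_forall_preimage_subset (g : X → Y) {β : Set (Set X)}
    {γ : Set (Set Y)} (hγ : γ.Finite) (hγcov : ⋃₀ γ = univ)
    (h : ∀ C ∈ γ, ∃ B ∈ β, g ⁻¹' C ⊆ B) : coverNum β ≤ coverNum γ := by
  obtain ⟨γ', hγ'γ, hγ', hγ'cov, hγ'card⟩ := exists_subcover_ncard_eq_coverNum hγ hγcov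
  choose! F hFβ hgF using h
  refine (coverNum_le_ncard (image_subset_iff.2 fun C hC => hFβ C (hγ'γ hC)) (hγ'.image F) ?_).trans
    (hγ'card ▸ ncard_image_le hγ')
  refine eq_univ_of_forall fun x => ?_
  obtain ⟨C, hC, hxC⟩ : g x ∈ ⋃₀ γ' := hγ'cov ▸ mem_univ _
  exact ⟨F C, mem_image_of_mem F hC, hgF C (hγ'γ hC) hxC⟩

theorem coverNum_coverIter_le_of_semiconj {g : X → Y} {T : X → X} {S : Y → Y}
    (hg : Function.Semiconj g T S) {α : Set (Set X)} {β : Set (Set Y)} (hβ : β.Finite)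
    (hβcov : ⋃₀ β = univ) (hαβ : ∀ B ∈ β, g ⁻¹' B ∈ α) (n : ℕ) :
    coverNum (coverIter T α n) ≤ coverNum (coverIter S β n) := by
  refine coverNum_le_of_forall_preimage_subset g (coverIter_finite hβ S n)
    (sUnion_coverIter hβcov S n) fun C hC => ?_
  rw [coverIter_eq_image] at hC ⊢
  obtain ⟨B, hB, rfl⟩ := hC
  exact ⟨_, mem_image_of_mem _ fun i _ => hαβ _ (hB i trivial), (hg.preimage_cylinder B).le⟩

theorem coverNum_coverIter_le_card (T : X → X) {α : Set (Set X)} {n : ℕ}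
    (W : Finset (Fin n → Set X)) (hWα : ∀ A ∈ W, ∀ i, A i ∈ α)
    (hWcov : ∀ x, ∃ A ∈ W, x ∈ cylinder T A) : coverNum (coverIter T α n) ≤ W.card := by
  refine (coverNum_le_ncard (γ := cylinder T '' (W : Set (Fin n → Set X))) ?_
    (W.finite_toSet.image (cylinder T)) ?_).trans ?_
  · rw [coverIter_eq_image]
    exact image_mono fun A hA i _ => hWα A hA i
  · refine eq_univ_of_forall fun x => ?_
    obtain ⟨A, hA, hxA⟩ := hWcov x
    exact ⟨_, mem_image_of_mem _ hA, hxA⟩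
  · exact (ncard_image_le W.finite_toSet).trans_eq (ncard_coe_finset W)

theorem exists_finset_words_card_le_coverNum (T : X → X) {α : Set (Set X)} (hα : α.Finite)
    (hαcov : ⋃₀ α = univ) (n : ℕ) :
    ∃ W : Finset (Fin n → Set X), (∀ A ∈ W, ∀ i, A i ∈ α) ∧
      (∀ x, ∃ A ∈ W, x ∈ cylinder T A) ∧ W.card ≤ coverNum (coverIter T α n) := by
  classical
  obtain ⟨γ, hγ, hγfin, hγcov, hγcard⟩ :=
    exists_subcover_ncard_eq_coverNum (coverIter_finite hα T n) (sUnion_coverIter hαcov T n)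
  rw [coverIter_eq_image] at hγ
  choose! word hword hcyl using fun C (hC : C ∈ γ) => hγ hC
  refine ⟨hγfin.toFinset.image word, ?_, fun x => ?_, ?_⟩
  · simp only [Finset.mem_image, Finite.mem_toFinset]
    rintro _ ⟨C, hC, rfl⟩ i
    exact hword C hC i trivial
  · obtain ⟨C, hC, hxC⟩ : x ∈ ⋃₀ γ := hγcov ▸ mem_univ x
    exact ⟨word C, Finset.mem_image_of_mem _ (hγfin.mem_toFinset.2 hC), (hcyl C hC).symm ▸ hxC⟩
  · rw [← hγcard, ncard_eq_toFinset_card γ hγfin]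
    exact Finset.card_image_le

end CoverNum

section Entropy

theorem log_natCast_le_log_natCast {a b : ℕ} (h : a ≤ b) : Real.log a ≤ Real.log b := by
  rcases a.eq_zero_or_pos with rfl | ha
  · simpa using Real.log_natCast_nonneg b
  · exact Real.log_le_log (by exact_mod_cast ha) (by exact_mod_cast h)

theorem log_le_of_le_two_pow_mul_add_one {a b k : ℕ} (h : a ≤ 2 ^ k * b + 1) :
    Real.log a ≤ (k + 1) * Real.log 2 + Real.log b := by
  have hmax : a ≤ 2 ^ (k + 1) * max b 1 := by
    have hpos : 1 ≤ 2 ^ k * max b 1 := Nat.one_le_iff_ne_zero.2 (by positivity)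
    calc a ≤ 2 ^ k * max b 1 + 1 := h.trans (by gcongr; exact le_max_left b 1)
      _ ≤ 2 ^ (k + 1) * max b 1 := by rw [pow_succ]; linarith
  have hlog_max : Real.log (max b 1 : ℕ) = Real.log b := by
    rcases b.eq_zero_or_pos with rfl | hb
    · simp
    · rw [max_eq_left hb]
  calc Real.log a ≤ Real.log (2 ^ (k + 1) * max b 1 : ℕ) := log_natCast_le_log_natCast hmax
    _ = (k + 1) * Real.log 2 + Real.log b := by
      rw [Nat.cast_mul, Real.log_mul (by positivity) (by positivity), hlog_max, Nat.cast_pow,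
        Real.log_pow]
      push_cast
      ring

theorem limsup_log_div_le_of_le_two_pow {a b : ℕ → ℕ} {m : ℕ} (hm : 0 < m)
    (h : ∀ N, a N ≤ 2 ^ (N / m + 1) * b N + 1) :
    limsup (fun N : ℕ => ((Real.log (a N) / N : ℝ) : EReal)) atTop ≤
      ((Real.log 2 / m : ℝ) : EReal) +
        limsup (fun N : ℕ => ((Real.log (b N) / N : ℝ) : EReal)) atTop := by
  set c : ℕ → ℝ := fun N => Real.log 2 / m + 2 * Real.log 2 / N
  have hc : Tendsto c atTop (𝓝 (Real.log 2 / m)) := by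
    simpa using tendsto_const_nhds.add (tendsto_const_div_atTop_nhds_zero_nat (2 * Real.log 2))
  have hc_limsup : limsup (fun N => (c N : EReal)) atTop = (Real.log 2 / m : ℝ) :=
    (EReal.tendsto_coe.2 hc).limsup_eq
  have hpointwise (N : ℕ) : Real.log (a N) / N ≤ c N + Real.log (b N) / N := by
    rcases N.eq_zero_or_pos with rfl | hN
    · simp only [c, CharP.cast_eq_zero, div_zero, add_zero]
      positivity
    have hlog : Real.log (a N) ≤ ((N : ℝ) / m + 2) * Real.log 2 + Real.log (b N) := by
      refine (log_le_of_le_two_pow_mul_add_one (h N)).trans <| add_le_add_left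
        (mul_le_mul_of_nonneg_right ?_ (Real.log_nonneg one_le_two)) _
      have : ((N / m : ℕ) : ℝ) ≤ N / m := Nat.cast_div_le
      push_cast
      linarith
    calc Real.log (a N) / N ≤ (((N : ℝ) / m + 2) * Real.log 2 + Real.log (b N)) / N := by
          gcongr
      _ = c N + Real.log (b N) / N := by
          simp only [c]
          field_simp
  calc limsup (fun N : ℕ => ((Real.log (a N) / N : ℝ) : EReal)) atTop
      ≤ limsup ((fun N => (c N : EReal)) +
          fun N : ℕ => ((Real.log (b N) / N : ℝ) : EReal)) atTop :=
        limsup_le_limsup (Eventually.of_forall fun N => by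
          simpa only [Pi.add_apply, ← EReal.coe_add, EReal.coe_le_coe_iff] using hpointwise N)
    _ ≤ limsup (fun N => (c N : EReal)) atTop +
          limsup (fun N : ℕ => ((Real.log (b N) / N : ℝ) : EReal)) atTop :=
        EReal.limsup_add_le (.inl (hc_limsup ▸ EReal.coe_ne_bot _))
          (.inl (hc_limsup ▸ EReal.coe_ne_top _))
    _ = _ := by rw [hc_limsup]

theorem EReal.le_of_forall_le_div_natCast_add {x y : EReal} (c : ℝ)
    (h : ∀ m : ℕ, 0 < m → x ≤ ((c / m : ℝ) : EReal) + y) : x ≤ y := by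
  have hc : Tendsto (fun m : ℕ => ((c / m : ℝ) : EReal)) atTop (𝓝 0) :=
    EReal.tendsto_coe.2 (_root_.tendsto_const_div_atTop_nhds_zero_nat c)
  have hlim : Tendsto (fun m : ℕ => ((c / m : ℝ) : EReal) + y) atTop (𝓝 (0 + y)) :=
    (EReal.continuousAt_add (p := (0, y)) (.inl EReal.zero_ne_top)
      (.inl EReal.zero_ne_bot)).tendsto.comp (hc.prodMk_nhds tendsto_const_nhds)
  rw [zero_add] at hlim
  exact ge_of_tendsto hlim (eventually_atTop.2 ⟨1, h⟩)

variable {X Y : Type*}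

theorem coverEntropyOf_le_of_coverNum_le {T : X → X} {S : Y → Y} {α : Set (Set X)}
    {β : Set (Set Y)} (h : ∀ n, coverNum (coverIter T α n) ≤ coverNum (coverIter S β n)) :
    coverEntropyOf T α ≤ coverEntropyOf S β :=
  limsup_le_limsup <| Eventually.of_forall fun n => EReal.coe_le_coe_iff.2 <|
    div_le_div_of_nonneg_right (log_natCast_le_log_natCast (h n)) n.cast_nonneg

theorem coverEntropyOf_le_topEntropy [TopologicalSpace X] (T : X → X) {α : Set (Set X)}
    (hα : IsAdmissibleCover α) : coverEntropyOf T α ≤ topEntropy T :=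
  le_iSup₂ (f := fun α (_ : IsAdmissibleCover α) => coverEntropyOf T α) α hα

end Entropy

section OnePointExtension

open OnePoint

variable {X : Type*}

theorem semiconj_coe_onePointExt (T : X → X) :
    Function.Semiconj ((↑) : X → OnePoint X) T (onePointExt T) := fun _ => rfl

theorem onePointExt_iterate_infty (T : X → X) (n : ℕ) : (onePointExt T)^[n] ∞ = ∞ :=
  Function.iterate_fixed rfl n

variable [TopologicalSpace X]

theorem isAdmissibleCover_singleton_univ : IsAdmissibleCover ({univ} : Set (Set X)) :=
  ⟨finite_singleton _, by simp, sUnion_singleton _, by simp⟩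

theorem IsAdmissibleCover.exists_isCompact_compl [Nonempty X] {α : Set (Set X)}
    (hα : IsAdmissibleCover α) : ∃ A ∈ α, IsCompact Aᶜ := by
  obtain ⟨hfin, hopen, hcov, hcpt⟩ := hα
  by_contra! hnone
  have hX : IsCompact (univ : Set X) := by
    refine (hfin.isCompact_biUnion fun A hA => (hcpt A hA).resolve_right (hnone A hA))
      |>.of_isClosed_subset isClosed_univ ?_
    rw [← hcov]
    exact sUnion_subset fun A hA => subset_closure.trans (subset_biUnion_of_mem hA)
  obtain ⟨A, hA, -⟩ : Classical.arbitrary X ∈ ⋃₀ α := hcov ▸ mem_univ _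
  exact hnone A hA (hX.of_isClosed_subset (hopen A hA).isClosed_compl (subset_univ _))

open Classical in
/-- `A ∪ {∞}` when `Aᶜ` is compact (so that it is open if `A` is), and `A` otherwise. -/
noncomputable def extendToOnePoint (A : Set X) : Set (OnePoint X) :=
  if IsCompact Aᶜ then ((↑) '' Aᶜ)ᶜ else (↑) '' A

theorem preimage_coe_extendToOnePoint (A : Set X) :
    ((↑) : X → OnePoint X) ⁻¹' extendToOnePoint A = A := by
  unfold extendToOnePoint
  split_ifs
  · rw [preimage_compl, preimage_image_eq _ coe_injective, compl_compl]
  · exact preimage_image_eq _ coe_injective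

theorem isOpen_extendToOnePoint {A : Set X} (hA : IsOpen A) : IsOpen (extendToOnePoint A) := by
  unfold extendToOnePoint
  split_ifs with h
  · exact isOpen_compl_image_coe.2 ⟨hA.isClosed_compl, h⟩
  · exact isOpen_image_coe.2 hA

theorem infty_mem_extendToOnePoint {A : Set X} (h : IsCompact Aᶜ) : ∞ ∈ extendToOnePoint A := by
  simp [extendToOnePoint, h]

theorem IsAdmissibleCover.image_extendToOnePoint [Nonempty X] {α : Set (Set X)}
    (hα : IsAdmissibleCover α) : IsAdmissibleCover (extendToOnePoint '' α) := by
  refine ⟨hα.1.image _, ?_, ?_, fun _ _ => .inl isClosed_closure.isCompact⟩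
  · rintro _ ⟨A, hA, rfl⟩
    exact isOpen_extendToOnePoint (hα.2.1 A hA)
  · refine eq_univ_of_forall fun y => ?_
    induction y using OnePoint.rec with
    | infty =>
      obtain ⟨A, hA, hAc⟩ := hα.exists_isCompact_compl
      exact ⟨_, mem_image_of_mem _ hA, infty_mem_extendToOnePoint hAc⟩
    | coe x =>
      obtain ⟨A, hA, hxA⟩ : x ∈ ⋃₀ α := hα.2.2.1 ▸ mem_univ x
      refine ⟨_, mem_image_of_mem _ hA, ?_⟩
      rwa [← mem_preimage, preimage_coe_extendToOnePoint]

theorem IsAdmissibleCover.exists_onePoint_coverNum_le {α : Set (Set X)}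
    (hα : IsAdmissibleCover α) (T : X → X) :
    ∃ β : Set (Set (OnePoint X)), IsAdmissibleCover β ∧
      ∀ n, coverNum (coverIter T α n) ≤ coverNum (coverIter (onePointExt T) β n) := by
  rcases isEmpty_or_nonempty X with hX | hX
  · exact ⟨{univ}, isAdmissibleCover_singleton_univ,
      fun n => (coverNum_eq_zero_of_isEmpty _).trans_le (Nat.zero_le _)⟩
  · have hβ := hα.image_extendToOnePoint
    refine ⟨_, hβ, coverNum_coverIter_le_of_semiconj (semiconj_coe_onePointExt T) hβ.1
      hβ.2.2.1 ?_⟩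
    rintro _ ⟨A, hA, rfl⟩
    rwa [preimage_coe_extendToOnePoint]

theorem topEntropy_le_topEntropy_onePointExt (T : X → X) :
    topEntropy T ≤ topEntropy (onePointExt T) :=
  iSup₂_le fun _ hα => by
    obtain ⟨β, hβ, hle⟩ := hα.exists_onePoint_coverNum_le T
    exact (coverEntropyOf_le_of_coverNum_le hle).trans (coverEntropyOf_le_topEntropy _ hβ)

end OnePointExtension

section ProperMap

variable {X : Type*} [TopologicalSpace X] {T : X → X}

theorem IsProper.isCompact_preimage_iterate (hT : IsProper T) {K : Set X} (hK : IsCompact K)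
    (n : ℕ) : IsCompact (T^[n] ⁻¹' K) := by
  induction n with
  | zero => exact hK
  | succ n ih =>
    rw [Function.iterate_succ, preimage_comp]
    exact hT.2 _ ih

theorem IsProper.isCompact_compl_cylinder_const (hT : IsProper T) {U : Set X}
    (hU : IsCompact Uᶜ) (m : ℕ) : IsCompact (cylinder T fun _ : Fin m => U)ᶜ := by
  simp only [cylinder, compl_iInter, ← preimage_compl]
  exact isCompact_iUnion fun i => hT.isCompact_preimage_iterate hU i

theorem Continuous.isOpen_cylinder (hT : Continuous T) {n : ℕ} {A : Fin n → Set X}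
    (hA : ∀ i, IsOpen (A i)) : IsOpen (cylinder T A) :=
  isOpen_iInter_of_finite fun i => (hA i).preimage (hT.iterate i)

end ProperMap

section Blocks

variable {Y : Type*}

/-- On the `l`-th block of `m` consecutive times the word copies the `m`-letter word that `L`
attaches to the first time of the block if `l ∈ P`, and is constantly `V` otherwise. -/
def blockWord {N n m : ℕ} (hN : N ≤ n * m) (L : Fin N → Fin m → Set Y) (V : Set Y)
    (P : Finset (Fin n)) (k : Fin N) : Set Y :=
  if (k.castLE hN).divNat ∈ P then
    L ⟨k / m * m, (Nat.div_mul_le_self k m).trans_lt k.2⟩ (k.castLE hN).modNat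
  else V

theorem exists_mem_cylinder_blockWord {S : Y → Y} {N n m : ℕ} (hN : N ≤ n * m)
    {L : Fin N → Fin m → Set Y} {V : Set Y} {y : Y}
    (hy : ∀ i : Fin N, S^[i] y ∈ cylinder S (L i) ∪ cylinder S fun _ : Fin m => V) :
    ∃ P : Finset (Fin n), y ∈ cylinder S (blockWord hN L V P) := by
  classical
  refine ⟨Finset.univ.filter fun l : Fin n => S^[l * m] y ∉ cylinder S fun _ : Fin m => V,
    mem_cylinder.2 fun k => ?_⟩
  have hstart : ((k.castLE hN).divNat : ℕ) * m = k / m * m := by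
    rw [Fin.coe_divNat, Fin.val_castLE]
  have hsplit : S^[k] y = S^[(k.castLE hN).modNat] (S^[k / m * m] y) := by
    rw [← Function.iterate_add_apply, Fin.coe_modNat, Fin.val_castLE, Nat.mod_add_div']
  rw [hsplit]
  unfold blockWord
  split_ifs with hP
  · rw [Finset.mem_filter, hstart] at hP
    exact mem_cylinder.1 ((hy _).resolve_right hP.2) _
  · rw [Finset.mem_filter, hstart, not_and, not_not] at hP
    exact mem_cylinder.1 (hP (Finset.mem_univ _)) _

end Blocks

section BlockCover

open OnePoint

variable {X : Type*} {T : X → X} {β : Set (Set (OnePoint X))} {V : Set (OnePoint X)}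

variable (T β V) in
def blockCover (m : ℕ) : Set (Set X) :=
  (fun B : Fin m → Set (OnePoint X) =>
    (↑) ⁻¹' (cylinder (onePointExt T) B ∪ cylinder (onePointExt T) fun _ : Fin m => V)) ''
    univ.pi fun _ => β

theorem blockCover_finite (hβ : β.Finite) (m : ℕ) : (blockCover T β V m).Finite :=
  (Set.Finite.pi fun _ => hβ).image _

theorem sUnion_blockCover (hβcov : ⋃₀ β = univ) (m : ℕ) : ⋃₀ blockCover T β V m = univ := by
  refine eq_univ_of_forall fun x => ?_
  obtain ⟨B, hB, hxB⟩ := exists_word_mem_cylinder hβcov (onePointExt T) m (x : OnePoint X)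
  exact ⟨_, mem_image_of_mem _ hB, Or.inl hxB⟩

open Classical in
/-- The `+ 1` accounts for `∞`, the factor `2ⁿ` for the choice of the blocks of an orbit segment
that leave `V`. -/
theorem coverNum_coverIter_onePointExt_le (hβ : β.Finite) (hβcov : ⋃₀ β = univ) (hV : V ∈ β)
    (hV_infty : ∞ ∈ V) {N n m : ℕ} (hN : N ≤ n * m) :
    coverNum (coverIter (onePointExt T) β N) ≤
      2 ^ n * coverNum (coverIter T (blockCover T β V m) N) + 1 := by
  obtain ⟨W, hWα, hWcov, hWcard⟩ := exists_finset_words_card_le_coverNum T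
    (blockCover_finite hβ m) (sUnion_blockCover hβcov m) N
  choose! L hLβ hL using fun A (hA : A ∈ blockCover T β V m) => hA
  beta_reduce at hL
  let word (A : Fin N → Set X) (P : Finset (Fin n)) := blockWord hN (fun i => L (A i)) V P
  refine (coverNum_coverIter_le_card (onePointExt T)
    (insert (fun _ => V) (Finset.image₂ word W Finset.univ.powerset)) ?_ ?_).trans ?_
  · simp only [Finset.mem_insert, Finset.mem_image₂]
    rintro _ (rfl | ⟨A, hA, P, -, rfl⟩) k
    · exact hV
    · simp only [word, blockWord]
      split_ifs
      exacts [hLβ _ (hWα A hA _) _ trivial, hV]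
  · intro y
    induction y using OnePoint.rec with
    | infty =>
      exact ⟨_, Finset.mem_insert_self _ _,
        mem_cylinder.2 fun k => (onePointExt_iterate_infty T k).symm ▸ hV_infty⟩
    | coe x =>
      obtain ⟨A, hA, hxA⟩ := hWcov x
      obtain ⟨P, hP⟩ := exists_mem_cylinder_blockWord (S := onePointExt T) (y := (x : OnePoint X))
        (L := fun i => L (A i)) (V := V) hN fun i => by
          rw [← ((semiconj_coe_onePointExt T).iterate_right i).eq, ← mem_preimage,
            hL _ (hWα A hA i)]
          exact mem_cylinder.1 hxA i
      exact ⟨_, Finset.mem_insert_of_mem (Finset.mem_image₂_of_mem hA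
        (Finset.mem_powerset.2 (Finset.subset_univ P))), hP⟩
  · calc _ ≤ (Finset.image₂ word W Finset.univ.powerset).card + 1 := Finset.card_insert_le _ _
      _ ≤ W.card * 2 ^ n + 1 := by
        grw [Finset.card_image₂_le, Finset.card_powerset, Finset.card_univ, Fintype.card_fin]
      _ ≤ 2 ^ n * coverNum (coverIter T (blockCover T β V m) N) + 1 := by
        rw [mul_comm]
        gcongr

theorem coverEntropyOf_onePointExt_le (hβ : β.Finite) (hβcov : ⋃₀ β = univ) (hV : V ∈ β)
    (hV_infty : ∞ ∈ V) {m : ℕ} (hm : 0 < m) :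
    coverEntropyOf (onePointExt T) β ≤
      ((Real.log 2 / m : ℝ) : EReal) + coverEntropyOf T (blockCover T β V m) :=
  limsup_log_div_le_of_le_two_pow hm fun N =>
    coverNum_coverIter_onePointExt_le hβ hβcov hV hV_infty <| by
      rw [add_one_mul]
      exact (Nat.lt_div_mul_add hm).le

variable [TopologicalSpace X]

theorem IsProper.isAdmissibleCover_blockCover (hT : IsProper T) (hβ : IsAdmissibleCover β)
    (hV : V ∈ β) (hV_infty : ∞ ∈ V) (m : ℕ) : IsAdmissibleCover (blockCover T β V m) := by
  obtain ⟨hVc, hVo⟩ := (isOpen_iff_of_mem' hV_infty).1 (hβ.2.1 V hV)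
  have hsemiconj := semiconj_coe_onePointExt T
  have hopen : ∀ A ∈ blockCover T β V m, IsOpen A := by
    rintro _ ⟨B, hB, rfl⟩
    dsimp only
    rw [preimage_union, hsemiconj.preimage_cylinder, hsemiconj.preimage_cylinder]
    exact (hT.1.isOpen_cylinder fun i => (hβ.2.1 _ (hB i trivial)).preimage continuous_coe).union
      (hT.1.isOpen_cylinder fun _ => hVo)
  refine ⟨blockCover_finite hβ.1 m, hopen, sUnion_blockCover hβ.2.2.1 m, ?_⟩
  intro A hA
  refine .inr <| (hT.isCompact_compl_cylinder_const hVc m).of_isClosed_subset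
    (hopen _ hA).isClosed_compl <| compl_subset_compl.2 ?_
  obtain ⟨B, -, rfl⟩ := hA
  dsimp only
  rw [preimage_union, hsemiconj.preimage_cylinder fun _ => V]
  exact subset_union_right

theorem IsProper.topEntropy_onePointExt_le (hT : IsProper T) :
    topEntropy (onePointExt T) ≤ topEntropy T :=
  iSup₂_le fun β hβ => by
    obtain ⟨V, hV, hV_infty⟩ : ∞ ∈ ⋃₀ β := hβ.2.2.1 ▸ mem_univ _
    refine EReal.le_of_forall_le_div_natCast_add (Real.log 2) fun m hm => ?_
    exact (coverEntropyOf_onePointExt_le hβ.1 hβ.2.2.1 hV hV_infty hm).trans <|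
      add_le_add_right (coverEntropyOf_le_topEntropy T
        (hT.isAdmissibleCover_blockCover hβ hV hV_infty m)) _

end BlockCover

theorem topEntropy_eq_topEntropy_onePoint_general {X : Type*} [TopologicalSpace X]
    (T : X → X) (hT : IsProper T) :
    topEntropy T = topEntropy (onePointExt T) :=
  le_antisymm (topEntropy_le_topEntropy_onePointExt T) hT.topEntropy_onePointExt_le

/-- for a proper map `T` on a locally compact separable space,
the topological entropy of `T` equals that of its extension `T̃` to the
one-point compactification. -/
theorem topEntropy_eq_topEntropy_onePoint {X : Type*} [TopologicalSpace X]
    [LocallyCompactSpace X] [TopologicalSpace.SeparableSpace X]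
    (T : X → X) (hT : IsProper T) :
    topEntropy T = topEntropy (onePointExt T) :=
  topEntropy_eq_topEntropy_onePoint_general T hT
end

section
/- If T : V → V is a linear isomorphism of a finite-dimensional real vector space and v is a recurrent point of T with T_H v = λv for some λ > 0, then λ = 1; in particular every recurrent point of T lies in the eigenspace of T_H with eigenvalue 1. -/
open Set Filter Topology

/-- The recurrent set of `T`: points in their own ω-limit set. -/
def recurrentSet {X : Type*} [TopologicalSpace X] (T : X → X) : Set X :=
  {x | MapClusterPt x Filter.atTop fun n => T^[n] x}

/-- `T = T_H T_E T_U` is a multiplicative Jordan decomposition: the factors commute,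
`T_H` is diagonalizable with positive eigenvalues, `T_E` is an isometry for some norm,
and `T_U` is unipotent. -/
structure IsMulJordanDecomp {V : Type*} [AddCommGroup V] [Module ℝ V]
    (T TH TE TU : V →ₗ[ℝ] V) : Prop where
  eq : T = TH ∘ₗ TE ∘ₗ TU
  commHE : Commute TH TE
  commHU : Commute TH TU
  commEU : Commute TE TU
  hyperbolic : ∃ (n : ℕ) (b : Module.Basis (Fin n) ℝ V) (c : Fin n → ℝ),
    (∀ i, 0 < c i) ∧ ∀ i, TH (b i) = c i • b i
  elliptic : ∃ N : V → ℝ, (∀ v, 0 ≤ N v) ∧ (∀ v, N v = 0 ↔ v = 0) ∧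
    (∀ v w, N (v + w) ≤ N v + N w) ∧ (∀ (r : ℝ) (v), N (r • v) = |r| * N v) ∧
    ∀ v, N (TE v) = N v
  unipotent : IsNilpotent (TU - LinearMap.id)

/-!
For an eigenvector `x` of `T_H` with eigenvalue `λ`, `Tⁿ x = λⁿ (T_E T_U)ⁿ x`. Since `T_E` preserves
a norm and all norms on `V` are equivalent, `T_Eⁿ` is bounded above and below uniformly in `n`,
while `T_U` and `T_U⁻¹` are unipotent, so their powers grow at most polynomially. Hence `‖Tⁿ x‖`
is `λⁿ` up to polynomial factors: for `λ < 1` the orbit tends to `0`, and for `λ > 1` it can only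
return near `x` if `x = 0`. A general recurrent point `w` is handled through its components in an
eigenbasis of `T_H`: for each eigenvalue `μ ≠ 1` a polynomial in `T_H`, which commutes with `T`,
maps `w` to a recurrent `μ`-eigenvector that keeps the `μ`-coordinates of `w` up to a nonzero
factor, so these coordinates vanish.
-/

/-- `V` normed by `N`: the identity map between it and `V` compares the two norms. -/
def WithNorm (V : Type*) (_N : V → ℝ) : Type _ := V

namespace WithNorm
variable {V : Type*} [AddCommGroup V] [Module ℝ V] (N : V → ℝ)
instance : AddCommGroup (WithNorm V N) := inferInstanceAs (AddCommGroup V)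
instance : Module ℝ (WithNorm V N) := inferInstanceAs (Module ℝ V)
instance : Norm (WithNorm V N) := ⟨N⟩
def linearEquiv : V ≃ₗ[ℝ] WithNorm V N := LinearEquiv.refl ℝ V
end WithNorm

theorem exists_norm_equiv_of_finiteDimensional {V : Type*} [NormedAddCommGroup V] [NormedSpace ℝ V]
    [FiniteDimensional ℝ V] {N : V → ℝ} (h0 : ∀ v, 0 ≤ N v) (hdef : ∀ v, N v = 0 ↔ v = 0)
    (htri : ∀ v w, N (v + w) ≤ N v + N w) (hsmul : ∀ (r : ℝ) (v), N (r • v) = |r| * N v) :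
    ∃ C, 0 ≤ C ∧ ∀ v, N v ≤ C * ‖v‖ ∧ ‖v‖ ≤ C * N v := by
  let core : NormedSpace.Core ℝ (WithNorm V N) :=
    { norm_nonneg := h0, norm_smul := hsmul, norm_triangle := htri, norm_eq_zero_iff := hdef }
  let := NormedAddCommGroup.ofCore core
  let : NormedSpace ℝ (WithNorm V N) := NormedSpace.ofCore core
  have : FiniteDimensional ℝ (WithNorm V N) := inferInstanceAs (FiniteDimensional ℝ V)
  let e := (WithNorm.linearEquiv N).toContinuousLinearEquiv
  refine ⟨max ‖(e : V →L[ℝ] WithNorm V N)‖ ‖(e.symm : WithNorm V N →L[ℝ] V)‖,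
    le_max_of_le_left (norm_nonneg _), fun v => ⟨?_, ?_⟩⟩
  · calc N v = ‖e v‖ := rfl
      _ ≤ _ := (e : V →L[ℝ] WithNorm V N).le_opNorm v
      _ ≤ _ := by gcongr; exact le_max_left _ _
  · calc ‖v‖ = ‖e.symm (e v)‖ := by rw [e.symm_apply_apply]
      _ ≤ _ := (e.symm : WithNorm V N →L[ℝ] V).le_opNorm (e v)
      _ ≤ _ := by gcongr; exacts [le_max_right _ _, le_rfl]

theorem IsNilpotent.exists_norm_pow_add_one_le {R : Type*} [NormedRing R] {s : R}
    (hs : IsNilpotent s) :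
    ∃ C : ℝ, 0 ≤ C ∧ ∃ k : ℕ, ∀ n : ℕ, ‖(s + 1) ^ n‖ ≤ C * ((n : ℝ) + 1) ^ k := by
  obtain ⟨m, hm⟩ := hs
  set M := ∑ j ∈ Finset.range m, ‖s ^ j‖
  have hM : ∀ j, ‖s ^ j‖ ≤ M := fun j => by
    rcases lt_or_ge j m with hj | hj
    · exact Finset.single_le_sum (fun i _ => norm_nonneg (s ^ i)) (Finset.mem_range.2 hj)
    · rw [pow_eq_zero_of_le hj hm, norm_zero]
      exact Finset.sum_nonneg fun i _ => norm_nonneg _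
  have hterm : ∀ n j : ℕ, ‖n.choose j • s ^ j‖ ≤ ((n : ℝ) + 1) ^ m * M := fun n j => by
    rcases lt_or_ge j m with hj | hj
    · calc ‖n.choose j • s ^ j‖ ≤ n.choose j * ‖s ^ j‖ := norm_nsmul_le
        _ ≤ ((n : ℝ) + 1) ^ m * M := by
          gcongr
          · calc (n.choose j : ℝ) ≤ (n : ℝ) ^ j := by exact_mod_cast Nat.choose_le_pow n j
              _ ≤ ((n : ℝ) + 1) ^ j := by gcongr; linarith
              _ ≤ ((n : ℝ) + 1) ^ m := pow_le_pow_right₀ (by linarith) hj.le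
          · exact hM j
    · rw [pow_eq_zero_of_le hj hm, smul_zero, norm_zero]
      exact mul_nonneg (by positivity) ((norm_nonneg _).trans (hM 0))
  refine ⟨M, (norm_nonneg _).trans (hM 0), m + 1, fun n => ?_⟩
  calc ‖(s + 1) ^ n‖ = ‖∑ j ∈ Finset.range (n + 1), n.choose j • s ^ j‖ := by
        rw [(Commute.one_right s).add_pow]
        simp only [one_pow, mul_one, nsmul_eq_mul']
    _ ≤ ∑ j ∈ Finset.range (n + 1), ((n : ℝ) + 1) ^ m * M :=
        norm_sum_le_of_le _ fun j _ => hterm n j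
    _ = M * ((n : ℝ) + 1) ^ (m + 1) := by
      simp only [Finset.sum_const, Finset.card_range, nsmul_eq_mul, Nat.cast_add, Nat.cast_one]
      ring

theorem Units.isNilpotent_inv_sub_one {R : Type*} [Ring R] (u : Rˣ)
    (hu : IsNilpotent ((u : R) - 1)) : IsNilpotent ((↑u⁻¹ : R) - 1) := by
  have : (↑u⁻¹ : R) - 1 = -(↑u⁻¹ * ((u : R) - 1)) := by
    rw [mul_sub, Units.inv_mul, mul_one, neg_sub]
  have hcomm : Commute (↑u⁻¹ : R) ((u : R) - 1) :=
    (Commute.refl (u : R)).units_inv_left.sub_right (Commute.one_right _)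
  rw [this]
  exact (hcomm.isNilpotent_mul_left hu).neg

section PolynomialOrbits

variable {V : Type*} [NormedAddCommGroup V]

def HasPolynomialOrbits {R : Type*} [Semiring R] [Module R V] (A : Module.End R V) : Prop :=
  ∃ C : ℝ, 0 ≤ C ∧ ∃ k : ℕ, ∀ (n : ℕ) (v : V),
    ‖(A ^ n) v‖ ≤ C * ((n : ℝ) + 1) ^ k * ‖v‖ ∧ ‖v‖ ≤ C * ((n : ℝ) + 1) ^ k * ‖(A ^ n) v‖

theorem HasPolynomialOrbits.mul {R : Type*} [Semiring R] [Module R V] {A B : Module.End R V}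
    (hA : HasPolynomialOrbits A) (hB : HasPolynomialOrbits B) (hAB : Commute A B) :
    HasPolynomialOrbits (A * B) := by
  obtain ⟨C, hC, k, h⟩ := hA
  obtain ⟨D, hD, m, h'⟩ := hB
  refine ⟨C * D, mul_nonneg hC hD, k + m, fun n v => ?_⟩
  have hp : ((n : ℝ) + 1) ^ (k + m) = ((n : ℝ) + 1) ^ k * ((n : ℝ) + 1) ^ m := pow_add _ _ _
  rw [hAB.mul_pow, Module.End.mul_apply, hp]
  constructor
  · calc ‖(A ^ n) ((B ^ n) v)‖ ≤ C * ((n : ℝ) + 1) ^ k * ‖(B ^ n) v‖ := (h n _).1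
      _ ≤ C * ((n : ℝ) + 1) ^ k * (D * ((n : ℝ) + 1) ^ m * ‖v‖) := by gcongr; exact (h' n v).1
      _ = _ := by ring
  · calc ‖v‖ ≤ D * ((n : ℝ) + 1) ^ m * ‖(B ^ n) v‖ := (h' n v).2
      _ ≤ D * ((n : ℝ) + 1) ^ m * (C * ((n : ℝ) + 1) ^ k * ‖(A ^ n) ((B ^ n) v)‖) := by
        gcongr; exact (h n _).2
      _ = _ := by ring

theorem hasPolynomialOrbits_of_isNilpotent_sub_one {𝕜 : Type*} [NontriviallyNormedField 𝕜]
    [CompleteSpace 𝕜] [NormedSpace 𝕜 V] [FiniteDimensional 𝕜 V] {U : Module.End 𝕜 V}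
    (hU : IsNilpotent (U - 1)) :
    HasPolynomialOrbits U := by
  let u := Module.End.toContinuousLinearMap V U
  have hu : IsNilpotent (u - 1) := by simpa [u] using hU.map (Module.End.toContinuousLinearMap V)
  obtain ⟨w, hw⟩ : IsUnit u := by simpa using hu.isUnit_one_add
  obtain ⟨C, hC0, k, hC⟩ := (hw ▸ hu).exists_norm_pow_add_one_le
  obtain ⟨D, -, m, hD⟩ := (w.isNilpotent_inv_sub_one (hw ▸ hu)).exists_norm_pow_add_one_le
  simp only [sub_add_cancel] at hC hD
  have hpow : ∀ n v, (U ^ n) v = ((w : V →L[𝕜] V) ^ n) v := fun n v => by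
    rw [hw, ← map_pow]; rfl
  refine ⟨max C D, le_max_of_le_left hC0, max k m, fun n v => ⟨?_, ?_⟩⟩
  · calc ‖(U ^ n) v‖ ≤ ‖(w : V →L[𝕜] V) ^ n‖ * ‖v‖ := hpow n v ▸ ContinuousLinearMap.le_opNorm _ _
      _ ≤ _ := by
        gcongr
        exact (hC n).trans (by gcongr <;> simp)
  · calc ‖v‖ = ‖((↑w⁻¹ : V →L[𝕜] V) ^ n) (((w : V →L[𝕜] V) ^ n) v)‖ := by
          change _ = ‖((↑w⁻¹ ^ n * ↑w ^ n : V →L[𝕜] V)) v‖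
          rw [← Units.val_pow_eq_pow_val, ← Units.val_pow_eq_pow_val, inv_pow, Units.inv_mul]; rfl
      _ ≤ ‖(↑w⁻¹ : V →L[𝕜] V) ^ n‖ * ‖(U ^ n) v‖ := hpow n v ▸ ContinuousLinearMap.le_opNorm _ _
      _ ≤ _ := by
        gcongr
        exact (hD n).trans (by gcongr <;> simp)

theorem hasPolynomialOrbits_of_norm_map_eq [NormedSpace ℝ V] [FiniteDimensional ℝ V]
    {N : V → ℝ} (h0 : ∀ v, 0 ≤ N v) (hdef : ∀ v, N v = 0 ↔ v = 0)
    (htri : ∀ v w, N (v + w) ≤ N v + N w) (hsmul : ∀ (r : ℝ) (v), N (r • v) = |r| * N v)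
    {E : Module.End ℝ V} (hE : ∀ v, N (E v) = N v) : HasPolynomialOrbits E := by
  obtain ⟨C, hC, hN⟩ := exists_norm_equiv_of_finiteDimensional h0 hdef htri hsmul
  have hEn : ∀ n v, N ((E ^ n) v) = N v := fun n v => by
    rw [Module.End.pow_apply]
    exact congrFun (Function.iterate_invariant (funext hE) n) v
  refine ⟨C * C, mul_nonneg hC hC, 0, fun n v => ⟨?_, ?_⟩⟩
  · calc ‖(E ^ n) v‖ ≤ C * N ((E ^ n) v) := (hN _).2
      _ ≤ C * (C * ‖v‖) := by rw [hEn]; gcongr; exact (hN v).1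
      _ = _ := by ring
  · calc ‖v‖ ≤ C * N v := (hN v).2
      _ ≤ C * (C * ‖(E ^ n) v‖) := by rw [← hEn n]; gcongr; exact (hN _).1
      _ = _ := by ring

end PolynomialOrbits

theorem tendsto_mul_succ_pow_mul_pow (C : ℝ) (k : ℕ) {r : ℝ} (hr0 : 0 < r) (hr1 : r < 1) :
    Tendsto (fun n : ℕ => C * ((n : ℝ) + 1) ^ k * r ^ n) atTop (𝓝 0) := by
  have h := ((tendsto_pow_const_mul_const_pow_of_lt_one k hr0.le hr1).comp
    (tendsto_add_atTop_nat 1)).const_mul (C * r⁻¹)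
  rw [mul_zero] at h
  refine h.congr fun n => ?_
  simp only [Function.comp_apply, Nat.cast_add, Nat.cast_one, pow_succ]
  field_simp

theorem Function.Semiconj.mapsTo_recurrentSet {X Y : Type*} [TopologicalSpace X]
    [TopologicalSpace Y] {f : X → Y} {T : X → X} {S : Y → Y} (h : Function.Semiconj f T S)
    (hf : Continuous f) : MapsTo f (recurrentSet T) (recurrentSet S) := fun x hx => by
  have := MapClusterPt.continuousAt_comp hf.continuousAt hx
  simpa only [recurrentSet, Set.mem_ofPred_eq, Function.comp_def, (h.iterate_right _).eq] using this

theorem eq_of_mem_recurrentSet_of_tendsto {X : Type*} [TopologicalSpace X] [T2Space X]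
    {T : X → X} {x y : X} (hx : x ∈ recurrentSet T)
    (h : Tendsto (fun n => T^[n] x) atTop (𝓝 y)) : x = y :=
  eq_of_nhds_neBot (hx.clusterPt.mono h)

theorem eq_zero_of_mem_recurrentSet_of_norm_iterate_le {E : Type*} [NormedAddCommGroup E]
    {T : E → E} {x : E} (hx : x ∈ recurrentSet T) {l C : ℝ} {k : ℕ} (hl : 0 < l) (hl1 : l ≠ 1)
    (hC : 0 ≤ C) (hupper : ∀ n : ℕ, ‖T^[n] x‖ ≤ C * ((n : ℝ) + 1) ^ k * l ^ n * ‖x‖)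
    (hlower : ∀ n : ℕ, ‖x‖ ≤ C * ((n : ℝ) + 1) ^ k * l⁻¹ ^ n * ‖T^[n] x‖) : x = 0 := by
  rcases hl1.lt_or_gt with hlt | hgt
  · have hnorm : Tendsto (fun n => ‖T^[n] x‖) atTop (𝓝 0) := by
      refine squeeze_zero (fun n => norm_nonneg _) hupper ?_
      simpa using (tendsto_mul_succ_pow_mul_pow C k hl hlt).mul_const ‖x‖
    exact eq_of_mem_recurrentSet_of_tendsto hx (tendsto_zero_iff_norm_tendsto_zero.2 hnorm)
  · have hnear : ∃ᶠ n in atTop, ‖T^[n] x‖ ≤ ‖x‖ + 1 :=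
      hx.frequently (continuous_norm.continuousAt.eventually (eventually_le_nhds (lt_add_one _)))
    have hsmall : ∃ᶠ n : ℕ in atTop, ‖x‖ ≤ C * ((n : ℝ) + 1) ^ k * l⁻¹ ^ n * (‖x‖ + 1) :=
      hnear.mono fun n hn => (hlower n).trans (by gcongr)
    have hlim := (tendsto_mul_succ_pow_mul_pow C k (inv_pos.2 hl)
      (inv_lt_one_of_one_lt₀ hgt)).mul_const (‖x‖ + 1)
    rw [zero_mul] at hlim
    exact norm_le_zero_iff.1 (ge_of_tendsto_of_frequently hlim hsmall)

theorem Commute.aeval_left {R A : Type*} [CommSemiring R] [Semiring A] [Algebra R A] {a b : A}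
    (h : Commute a b) (p : Polynomial R) : Commute (Polynomial.aeval a p) b := by
  induction p using Polynomial.induction_on' with
  | add p q hp hq => simpa only [map_add] using hp.add_left hq
  | monomial n r =>
    rw [Polynomial.aeval_monomial]
    exact (Algebra.commute_algebraMap_left r b).mul_left (h.pow_left n)

namespace Module.Basis

variable {ι K V : Type*} [AddCommGroup V]

theorem repr_aeval_apply [CommRing K] [Module K V] (b : Basis ι K V) {c : ι → K}
    {f : Module.End K V} (hb : ∀ i, f (b i) = c i • b i) (p : Polynomial K) (w : V) (i : ι) :
    b.repr (Polynomial.aeval f p w) i = p.eval (c i) * b.repr w i := by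
  suffices (b.coord i) ∘ₗ Polynomial.aeval f p = p.eval (c i) • b.coord i from
    LinearMap.congr_fun this w
  refine b.ext fun j => ?_
  rw [LinearMap.comp_apply, Module.End.aeval_apply_of_mem_apply_eq_smul (hb j)]
  rcases eq_or_ne j i with rfl | hji
  · simp
  · simp [hji]

theorem exists_aeval_apply_eq_smul [Field K] [Module K V] [Fintype ι] (b : Basis ι K V)
    {c : ι → K} {f : Module.End K V} (hb : ∀ i, f (b i) = c i • b i) (i : ι) :
    ∃ p : Polynomial K, p.eval (c i) ≠ 0 ∧
      ∀ w, f (Polynomial.aeval f p w) = c i • Polynomial.aeval f p w := by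
  classical
  let p := ∏ j ∈ Finset.univ.filter (c · ≠ c i), (Polynomial.X - Polynomial.C (c j))
  have hp : ∀ k, p.eval (c k) = 0 ∨ c k = c i := fun k => by
    rcases eq_or_ne (c k) (c i) with h | h
    · exact .inr h
    · left
      rw [Polynomial.eval_prod]
      exact Finset.prod_eq_zero (i := k) (by simpa using h) (by simp)
  refine ⟨p, ?_, fun w => b.ext_elem fun k => ?_⟩
  · rw [Polynomial.eval_prod, Finset.prod_ne_zero_iff]
    intro j hj
    simpa [sub_eq_zero, eq_comm] using (Finset.mem_filter.1 hj).2
  · have hf := b.repr_aeval_apply hb Polynomial.X (Polynomial.aeval f p w) k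
    rw [Polynomial.aeval_X, Polynomial.eval_X] at hf
    rw [hf, map_smul, Finsupp.smul_apply, smul_eq_mul, b.repr_aeval_apply hb]
    rcases hp k with h | h <;> simp [h]

end Module.Basis

namespace IsMulJordanDecomp

variable {V : Type*} [NormedAddCommGroup V] [NormedSpace ℝ V] [FiniteDimensional ℝ V]
  {T TH TE TU : V →ₗ[ℝ] V}

theorem hasPolynomialOrbits_mul (hJ : IsMulJordanDecomp T TH TE TU) :
    HasPolynomialOrbits (TE * TU) := by
  obtain ⟨N, h0, hdef, htri, hsmul, hE⟩ := hJ.elliptic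
  exact (hasPolynomialOrbits_of_norm_map_eq h0 hdef htri hsmul hE).mul
    (hasPolynomialOrbits_of_isNilpotent_sub_one hJ.unipotent) hJ.commEU

theorem eq_zero_of_mem_recurrentSet (hJ : IsMulJordanDecomp T TH TE TU) {l : ℝ} (hl : 0 < l)
    (hl1 : l ≠ 1) {x : V} (heig : TH x = l • x) (hx : x ∈ recurrentSet T) : x = 0 := by
  obtain ⟨C, hC, k, hA⟩ := hJ.hasPolynomialOrbits_mul
  have hiter : ∀ n : ℕ, T^[n] x = l ^ n • ((TE * TU) ^ n) x := fun n => by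
    have hT : T = (TE * TU) * TH := (hJ.commHE.mul_right hJ.commHU).eq ▸ hJ.eq
    have hTHn : (TH ^ n) x = l ^ n • x := by
      simpa using Module.End.aeval_apply_of_mem_apply_eq_smul (p := Polynomial.X ^ n) heig
    rw [← Module.End.pow_apply, hT, (hJ.commHE.mul_right hJ.commHU).symm.mul_pow,
      Module.End.mul_apply, hTHn, map_smul]
  refine eq_zero_of_mem_recurrentSet_of_norm_iterate_le hx hl hl1 hC (k := k)
    (fun n => ?_) fun n => ?_
  · rw [hiter, norm_smul, Real.norm_of_nonneg (by positivity)]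
    calc l ^ n * ‖((TE * TU) ^ n) x‖ ≤ l ^ n * (C * ((n : ℝ) + 1) ^ k * ‖x‖) := by
          gcongr; exact (hA n x).1
      _ = _ := by ring
  · calc ‖x‖ ≤ C * ((n : ℝ) + 1) ^ k * ‖((TE * TU) ^ n) x‖ := (hA n x).2
      _ = _ := by
        rw [hiter, norm_smul, Real.norm_of_nonneg (by positivity), inv_pow, ← mul_assoc,
          mul_assoc _ (l ^ n)⁻¹, inv_mul_cancel₀ (by positivity), mul_one]

theorem recurrentSet_subset (hJ : IsMulJordanDecomp T TH TE TU) :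
    recurrentSet T ⊆ {w | TH w = w} := by
  obtain ⟨d, b, c, hc, hb⟩ := hJ.hyperbolic
  have hTH : Commute TH T := hJ.eq ▸ (Commute.refl TH).mul_right (hJ.commHE.mul_right hJ.commHU)
  intro w hw
  refine b.ext_elem fun i => ?_
  have hTHw := b.repr_aeval_apply hb Polynomial.X w i
  rw [Polynomial.aeval_X, Polynomial.eval_X] at hTHw
  rw [hTHw]
  rcases eq_or_ne (c i) 1 with h1 | h1
  · rw [h1, one_mul]
  obtain ⟨p, hp0, hpeig⟩ := b.exists_aeval_apply_eq_smul hb i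
  have hrec : Polynomial.aeval TH p w ∈ recurrentSet T :=
    Function.Semiconj.mapsTo_recurrentSet (fun y => LinearMap.congr_fun (hTH.aeval_left p).eq y)
      (LinearMap.continuous_of_finiteDimensional _) hw
  have hwi := b.repr_aeval_apply hb p w i
  rw [hJ.eq_zero_of_mem_recurrentSet (hc i) h1 (hpeig w) hrec, map_zero, Finsupp.zero_apply,
    eq_comm, mul_eq_zero] at hwi
  rw [hwi.resolve_left hp0, mul_zero]

end IsMulJordanDecomp

theorem eigenvalue_one_of_recurrent_general {V : Type*} [NormedAddCommGroup V] [NormedSpace ℝ V]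
    [FiniteDimensional ℝ V] (T TH TE TU : V →ₗ[ℝ] V)
    (hJ : IsMulJordanDecomp T TH TE TU)
    (v : V) (hv : v ∈ recurrentSet T) (hv0 : v ≠ 0)
    (l : ℝ) (heig : TH v = l • v) :
    l = 1 ∧ recurrentSet T ⊆ {w | TH w = w} := by
  have hfix : TH v = v := hJ.recurrentSet_subset hv
  refine ⟨smul_left_injective ℝ hv0 ?_, hJ.recurrentSet_subset⟩
  simpa only [one_smul, hfix] using heig.symm

/-- if `v` is a recurrent point of a linear isomorphism `T` which is an
eigenvector of the hyperbolic part `T_H` with eigenvalue `λ > 0`, then `λ = 1`;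
in particular every recurrent point of `T` is fixed by `T_H`. -/
theorem eigenvalue_one_of_recurrent {V : Type*} [NormedAddCommGroup V] [NormedSpace ℝ V]
    [FiniteDimensional ℝ V] (T TH TE TU : V →ₗ[ℝ] V)
    (hbij : Function.Bijective T) (hJ : IsMulJordanDecomp T TH TE TU)
    (v : V) (hv : v ∈ recurrentSet T) (hv0 : v ≠ 0)
    (l : ℝ) (hl : 0 < l) (heig : TH v = l • v) :
    l = 1 ∧ recurrentSet T ⊆ {w | TH w = w} :=
  eigenvalue_one_of_recurrent_general T TH TE TU hJ v hv hv0 l heig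
end
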